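/- arXiv:2107.13828 — 2 statements merged into one kernel-verified Lean document; each statement's English description precedes it below -/
import Mathlib

section
/- Let Ω ⊂ ℝ^d be a bounded open Lipschitz set and let s_n → 0⁺. For every u ∈ L²(Ω) and every sequence u^n ⇀ u weakly in L²(Ω), it holds that (dω_d/2)‖u‖²_{L²(Ω)} ≤ liminf_{n→∞} s_n [ũ^n]²_{s_n}, where ω_d is the volume of the unit ball in ℝ^d. -/
open MeasureTheory Filter Topology ENNReal

noncomputable def gagliardo (d : ℕ) (s : ℝ) (u : EuclideanSpace ℝ (Fin d) → ℝ) : ℝ≥0∞ :=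
  ∫⁻ x, ∫⁻ y, ENNReal.ofReal ((u x - u y) ^ 2 / ‖x - y‖ ^ ((d : ℝ) + 2 * s))

/-!
If `v` vanishes outside a set of diameter `< ρ`, then for `x` in the set every `y` with
`‖x - y‖ ≥ ρ` lies outside it, so there the Gagliardo integrand is at least `v(x)² ‖x - y‖^(-d-2s)`.
Integrating this tail in polar coordinates, `∫_{‖z‖ ≥ ρ} ‖z‖^(-d-2s) = d ω_d ρ^(-2s) / (2s)`, gives
`s [v]_s² ≥ (d ω_d / 2) ρ^(-2s) ‖v‖²`. As `s → 0` the factor `ρ^(-2s)` tends to `1`, and the weak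
lower semicontinuity of the `L²` norm finishes the proof.
-/

open Set Metric

lemma eqOn_pow_smul_indicator_rpow {d : ℕ} (hd : 0 < d) (ρ s : ℝ) :
    EqOn (fun y : ℝ ↦ y ^ (d - 1) • (Ici ρ).indicator (fun r ↦ r ^ (-(d + 2 * s))) y)
      ((Ici ρ).indicator fun y ↦ y ^ (-1 - 2 * s)) (Ioi 0) := by
  intro y (hy : 0 < y)
  by_cases hyρ : y ∈ Ici ρ
  · simp only [indicator_of_mem hyρ, smul_eq_mul]
    rw [← Real.rpow_natCast, ← Real.rpow_add hy, Nat.cast_sub hd]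
    congr 1
    push_cast
    ring
  · simp [indicator_of_notMem hyρ]

section TailIntegral

variable {E : Type*} [NormedAddCommGroup E] [NormedSpace ℝ E] [FiniteDimensional ℝ E]
  [MeasurableSpace E] [BorelSpace E] [Nontrivial E] (μ : Measure E) [μ.IsAddHaarMeasure]

lemma integrable_norm_rpow_neg_indicator {ρ s : ℝ} (hρ : 0 < ρ) (hs : 0 < s) :
    Integrable (fun z ↦ (Ici ρ).indicator
      (fun r ↦ r ^ (-(Module.finrank ℝ E + 2 * s))) ‖z‖) μ := by
  rw [integrable_fun_norm_addHaar μ, integrableOn_congr_fun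
      (eqOn_pow_smul_indicator_rpow Module.finrank_pos ρ s) measurableSet_Ioi,
    IntegrableOn, integrable_indicator_iff measurableSet_Ici, IntegrableOn,
    Measure.restrict_restrict measurableSet_Ici, inter_eq_left.2 (Ici_subset_Ioi.2 hρ),
    ← IntegrableOn, integrableOn_Ici_iff_integrableOn_Ioi]
  exact integrableOn_Ioi_rpow_of_lt (by linarith) hρ

lemma integral_norm_rpow_neg_indicator {ρ s : ℝ} (hρ : 0 < ρ) (hs : 0 < s) :
    ∫ z, (Ici ρ).indicator (fun r ↦ r ^ (-(Module.finrank ℝ E + 2 * s))) ‖z‖ ∂μ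
      = Module.finrank ℝ E * μ.real (ball 0 1) * (ρ ^ (-(2 * s)) / (2 * s)) := by
  rw [integral_fun_norm_addHaar μ, setIntegral_congr_fun measurableSet_Ioi
      (eqOn_pow_smul_indicator_rpow Module.finrank_pos ρ s),
    setIntegral_indicator measurableSet_Ici, inter_eq_right.2 (Ici_subset_Ioi.2 hρ),
    integral_Ici_eq_integral_Ioi, integral_Ioi_rpow_of_lt (by linarith) hρ, nsmul_eq_mul,
    smul_eq_mul, show -1 - 2 * s + 1 = -(2 * s) by ring, neg_div_neg_eq]
  ring

lemma lintegral_norm_rpow_neg_indicator {ρ s : ℝ} (hρ : 0 < ρ) (hs : 0 < s) :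
    ∫⁻ z, ENNReal.ofReal ((Ici ρ).indicator
        (fun r ↦ r ^ (-(Module.finrank ℝ E + 2 * s))) ‖z‖) ∂μ
      = ENNReal.ofReal (Module.finrank ℝ E * μ.real (ball 0 1) * (ρ ^ (-(2 * s)) / (2 * s))) := by
  rw [← integral_norm_rpow_neg_indicator μ hρ hs, ofReal_integral_eq_lintegral_ofReal
    (integrable_norm_rpow_neg_indicator μ hρ hs)]
  refine .of_forall fun z ↦ indicator_nonneg (fun r hr ↦ ?_) _
  exact Real.rpow_nonneg (hρ.le.trans hr) _

end TailIntegral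

lemma sq_mul_indicator_rpow_le {E : Type*} [SeminormedAddCommGroup E] {Ω : Set E} {ρ : ℝ}
    (hΩ : ∀ x ∈ Ω, ∀ y ∈ Ω, ‖x - y‖ < ρ) (p : ℝ) {v : E → ℝ} (hv : ∀ x, x ∉ Ω → v x = 0)
    (x y : E) :
    ENNReal.ofReal (v x ^ 2) * ENNReal.ofReal ((Ici ρ).indicator (fun r ↦ r ^ (-p)) ‖x - y‖)
      ≤ ENNReal.ofReal ((v x - v y) ^ 2 / ‖x - y‖ ^ p) := by
  by_cases hx : x ∈ Ω
  · by_cases hxy : ‖x - y‖ ∈ Ici ρ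
    · have hy : y ∉ Ω := fun hy ↦ (hΩ x hx y hy).not_ge hxy
      rw [indicator_of_mem hxy, ← ENNReal.ofReal_mul (sq_nonneg _), hv y hy, sub_zero,
        Real.rpow_neg (norm_nonneg _), div_eq_mul_inv]
    · simp [indicator_of_notMem hxy]
  · simp [hv x hx]

lemma lintegral_sq_mul_tail_le_gagliardo {d : ℕ} {Ω : Set (EuclideanSpace ℝ (Fin d))} {ρ : ℝ}
    (hΩ : ∀ x ∈ Ω, ∀ y ∈ Ω, ‖x - y‖ < ρ) (s : ℝ) {v : EuclideanSpace ℝ (Fin d) → ℝ}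
    (hv_meas : AEMeasurable v) (hv : ∀ x, x ∉ Ω → v x = 0) :
    (∫⁻ x, ENNReal.ofReal (v x ^ 2)) *
        ∫⁻ z : EuclideanSpace ℝ (Fin d),
          ENNReal.ofReal ((Ici ρ).indicator (fun r ↦ r ^ (-(d + 2 * s))) ‖z‖)
      ≤ gagliardo d s v := by
  set g : EuclideanSpace ℝ (Fin d) → ℝ≥0∞ :=
    fun z ↦ ENNReal.ofReal ((Ici ρ).indicator (fun r ↦ r ^ (-(d + 2 * s))) ‖z‖)
  have hg : Measurable g :=
    measurable_ofReal.comp (((measurable_id.pow_const _).indicator measurableSet_Ici).comp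
      measurable_norm)
  rw [← lintegral_mul_const'' _ (hv_meas.pow_const 2).ennreal_ofReal]
  refine lintegral_mono fun x ↦ ?_
  rw [← (Measure.measurePreserving_sub_left volume x).lintegral_comp hg,
    ← lintegral_const_mul' _ _ ofReal_ne_top]
  exact lintegral_mono fun y ↦ sq_mul_indicator_rpow_le hΩ _ hv x y

lemma mul_lintegral_sq_le_mul_gagliardo {d : ℕ} {Ω : Set (EuclideanSpace ℝ (Fin d))} {ρ : ℝ}
    (hρ : 0 < ρ) (hΩ : ∀ x ∈ Ω, ∀ y ∈ Ω, ‖x - y‖ < ρ) {s : ℝ} (hs : 0 < s)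
    {v : EuclideanSpace ℝ (Fin d) → ℝ} (hv_meas : AEMeasurable v) (hv : ∀ x, x ∉ Ω → v x = 0) :
    ENNReal.ofReal (d * (volume (ball (0 : EuclideanSpace ℝ (Fin d)) 1)).toReal / 2
        * ρ ^ (-(2 * s))) * ∫⁻ x, ENNReal.ofReal (v x ^ 2)
      ≤ ENNReal.ofReal s * gagliardo d s v := by
  rcases Nat.eq_zero_or_pos d with rfl | hd
  · simp
  have : Nontrivial (EuclideanSpace ℝ (Fin d)) :=
    Module.nontrivial_of_finrank_pos (R := ℝ) (by rwa [finrank_euclideanSpace_fin])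
  have htail := lintegral_norm_rpow_neg_indicator (volume : Measure (EuclideanSpace ℝ (Fin d)))
    hρ hs
  rw [finrank_euclideanSpace_fin] at htail
  have hcoef : ENNReal.ofReal (d * (volume (ball (0 : EuclideanSpace ℝ (Fin d)) 1)).toReal / 2
      * ρ ^ (-(2 * s))) = ENNReal.ofReal s *
        ENNReal.ofReal (d * volume.real (ball (0 : EuclideanSpace ℝ (Fin d)) 1) *
          (ρ ^ (-(2 * s)) / (2 * s))) := by
    rw [← ENNReal.ofReal_mul hs.le, measureReal_def]
    congr 1
    field_simp
  rw [hcoef, ← htail, mul_assoc, mul_comm (∫⁻ z, _)]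
  gcongr
  exact lintegral_sq_mul_tail_le_gagliardo hΩ s hv_meas hv

lemma sq_integral_mul_le {α : Type*} [MeasurableSpace α] {μ : Measure α} {f g : α → ℝ}
    (hf : MemLp f 2 μ) (hg : MemLp g 2 μ) :
    (∫ x, f x * g x ∂μ) ^ 2 ≤ (∫ x, f x ^ 2 ∂μ) * ∫ x, g x ^ 2 ∂μ := by
  have inner_eq : ∀ {φ ψ : α → ℝ} (hφ : MemLp φ 2 μ) (hψ : MemLp ψ 2 μ),
      inner ℝ (hφ.toLp φ) (hψ.toLp ψ) = ∫ x, φ x * ψ x ∂μ := fun hφ hψ ↦ by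
    refine integral_congr_ae ?_
    filter_upwards [hφ.coeFn_toLp, hψ.coeFn_toLp] with x hφx hψx
    simp [hφx, hψx, mul_comm]
  simpa only [inner_eq, sq] using real_inner_mul_inner_self_le (hf.toLp f) (hg.toLp g)

lemma ofReal_mul_integral_sq_le_liminf {α : Type*} [MeasurableSpace α] {μ : Measure α}
    {u : α → ℝ} {un : ℕ → α → ℝ} (hu : MemLp u 2 μ) (hun : ∀ n, MemLp (un n) 2 μ)
    (hweak : Tendsto (fun n ↦ ∫ x, un n x * u x ∂μ) atTop (𝓝 (∫ x, u x * u x ∂μ)))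
    {a : ℕ → ℝ} {c : ℝ} (ha : Tendsto a atTop (𝓝 c)) (ha_nonneg : ∀ n, 0 ≤ a n) :
    ENNReal.ofReal (c * ∫ x, u x ^ 2 ∂μ)
      ≤ liminf (fun n ↦ ENNReal.ofReal (a n * ∫ x, un n x ^ 2 ∂μ)) atTop := by
  set B := ∫ x, u x ^ 2 ∂μ
  have hB_nonneg : 0 ≤ B := integral_nonneg fun x ↦ sq_nonneg (u x)
  rcases hB_nonneg.eq_or_lt with hB | hB
  · rw [← hB, mul_zero, ENNReal.ofReal_zero]
    exact zero_le
  -- Cauchy–Schwarz: `‖un n‖² ≥ ⟪un n, u⟫² / ‖u‖²`, and the right side tends to `‖u‖²`.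
  have hlim : Tendsto (fun n ↦ a n * ((∫ x, un n x * u x ∂μ) ^ 2 / B)) atTop (𝓝 (c * B)) := by
    have huu : ∫ x, u x * u x ∂μ = B := by simp only [B, sq]
    have := ha.mul ((hweak.pow 2).div_const B)
    rwa [huu, sq, mul_div_cancel_right₀ _ hB.ne'] at this
  rw [← ((ENNReal.continuous_ofReal.tendsto _).comp hlim).liminf_eq]
  refine liminf_le_liminf (.of_forall fun n ↦ ENNReal.ofReal_le_ofReal ?_)
  refine mul_le_mul_of_nonneg_left ?_ (ha_nonneg n)
  rw [div_le_iff₀ hB]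
  exact sq_integral_mul_le (hun n) hu

theorem stmt1_general (d : ℕ) (Ω : Set (EuclideanSpace ℝ (Fin d)))
    (hΩbdd : Bornology.IsBounded Ω)
    (s : ℕ → ℝ) (hs : ∀ n, s n ∈ Set.Ioo (0 : ℝ) 1) (hs0 : Tendsto s atTop (𝓝 0))
    (u : EuclideanSpace ℝ (Fin d) → ℝ) (hu : MemLp u 2 volume)
    (un : ℕ → EuclideanSpace ℝ (Fin d) → ℝ)
    (hun : ∀ n, MemLp (un n) 2 volume)
    (hunsupp : ∀ n, ∀ x, x ∉ Ω → un n x = 0)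
    (hweak : ∀ g : EuclideanSpace ℝ (Fin d) → ℝ, MemLp g 2 volume →
      Tendsto (fun n => ∫ x, un n x * g x) atTop (𝓝 (∫ x, u x * g x))) :
    ENNReal.ofReal ((d : ℝ) * (volume (Metric.ball (0 : EuclideanSpace ℝ (Fin d)) 1)).toReal / 2
        * ∫ x, (u x) ^ 2)
      ≤ Filter.liminf (fun n => ENNReal.ofReal (s n) * gagliardo d (s n) (un n)) atTop := by
  set c := (d : ℝ) * (volume (ball (0 : EuclideanSpace ℝ (Fin d)) 1)).toReal / 2
  obtain ⟨ρ, hρ, hΩρ⟩ : ∃ ρ > 0, ∀ x ∈ Ω, ∀ y ∈ Ω, ‖x - y‖ < ρ := by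
    obtain ⟨C, hC⟩ := isBounded_iff.1 hΩbdd
    refine ⟨max C 0 + 1, by positivity, fun x hx y hy ↦ ?_⟩
    rw [← dist_eq_norm]
    linarith [hC hx hy, le_max_left C 0]
  have hweight : Tendsto (fun n ↦ c * ρ ^ (-(2 * s n))) atTop (𝓝 c) := by
    have hexp : Tendsto (fun n ↦ -(2 * s n)) atTop (𝓝 0) := by
      simpa using (hs0.const_mul 2).neg
    simpa using ((Real.continuousAt_const_rpow hρ.ne').tendsto.comp hexp).const_mul c
  refine (ofReal_mul_integral_sq_le_liminf hu hun (hweak u hu) hweight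
    fun n ↦ by positivity).trans (liminf_le_liminf (.of_forall fun n ↦ ?_))
  rw [ENNReal.ofReal_mul (by positivity), ofReal_integral_eq_lintegral_ofReal
    (hun n).integrable_sq (.of_forall fun x ↦ sq_nonneg _)]
  exact mul_lintegral_sq_le_mul_gagliardo hρ hΩρ (hs n).1
    (hun n).aestronglyMeasurable.aemeasurable (hunsupp n)

/-- Γ-liminf inequality as `s → 0⁺`. -/
theorem stmt1 (d : ℕ) (Ω : Set (EuclideanSpace ℝ (Fin d)))
    (hΩopen : IsOpen Ω) (hΩbdd : Bornology.IsBounded Ω)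
    (s : ℕ → ℝ) (hs : ∀ n, s n ∈ Set.Ioo (0 : ℝ) 1) (hs0 : Tendsto s atTop (𝓝 0))
    (u : EuclideanSpace ℝ (Fin d) → ℝ) (hu : MemLp u 2 volume)
    (husupp : ∀ x, x ∉ Ω → u x = 0)
    (un : ℕ → EuclideanSpace ℝ (Fin d) → ℝ)
    (hun : ∀ n, MemLp (un n) 2 volume)
    (hunsupp : ∀ n, ∀ x, x ∉ Ω → un n x = 0)
    (hweak : ∀ g : EuclideanSpace ℝ (Fin d) → ℝ, MemLp g 2 volume →
      Tendsto (fun n => ∫ x, un n x * g x) atTop (𝓝 (∫ x, u x * g x))) :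
    ENNReal.ofReal ((d : ℝ) * (volume (Metric.ball (0 : EuclideanSpace ℝ (Fin d)) 1)).toReal / 2
        * ∫ x, (u x) ^ 2)
      ≤ Filter.liminf (fun n => ENNReal.ofReal (s n) * gagliardo d (s n) (un n)) atTop :=
  stmt1_general d Ω hΩbdd s hs hs0 u hu un hun hunsupp hweak
end

section
/- There exists a constant C(d) > 0 such that for every v ∈ L²(ℝ^d), every h ∈ ℝ^d, every bounded open set Ω' ⊂ ℝ^d, and every 0 < ρ ≤ |h|: ‖τ_h v − v‖²_{L²(Ω')} ≤ C(d) (|h|²/ρ^{d+2}) ∫_{B_ρ} ‖τ_y v − v‖²_{L²(Ω'_{|h|})} dy, where τ_h v(·) = v(·+h) and Ω'_t = {x : dist(x, Ω') < t}. -/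
/-!
Write `h = N • e` with `ρ / 3 ≤ ‖e‖ ≤ ρ / 2`. Telescoping along `x, x + e, …, x + N • e` and
Cauchy–Schwarz give `|v (x + h) - v x|² ≤ N ∑ₖ |v (x + (k + 1) • e) - v (x + k • e)|²`. Each step is
controlled by averaging: for `‖y‖ < ρ / 4` split `e = (e - y) + y`, where both `e - y` and `y` lie in
`B_ρ`, so `‖τ_e v - v‖² ≤ 2 ‖τ_{e-y} v - v‖² + 2 ‖τ_y v - v‖²` on slightly larger sets; averaging
over `y ∈ B_{ρ/4}` bounds each step by `4 |B_{ρ/4}|⁻¹ ∫_{B_ρ} ‖τ_y v - v‖² dy`. As `N ≤ 3 ‖h‖ / ρ`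
and `|B_{ρ/4}| = (ρ/4)^d |B_1|`, the total factor is at most `36 · 4^d / |B_1| · ‖h‖² / ρ^(d+2)`.
-/

open MeasureTheory ENNReal Metric Set Finset Module

theorem MeasureTheory.MeasurePreserving.setLIntegral_comp_le_of_mapsTo {α β : Type*}
    [MeasurableSpace α] [MeasurableSpace β] {μ : Measure α} {ν : Measure β} {φ : α → β}
    (hφ : MeasurePreserving φ μ ν) (hφe : MeasurableEmbedding φ) {s : Set α} {t : Set β}
    (hst : MapsTo φ s t) (F : β → ℝ≥0∞) :
    ∫⁻ x in s, F (φ x) ∂μ ≤ ∫⁻ y in t, F y ∂ν := by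
  rw [hφ.setLIntegral_comp_emb hφe]
  exact lintegral_mono_set hst.image_subset

noncomputable def incrSq {G : Type*} [Add G] (f : G → ℝ) (c x : G) : ℝ≥0∞ :=
  ENNReal.ofReal ((f (x + c) - f x) ^ 2)

section AddCommGroup

variable {G : Type*} [AddCommGroup G] (f : G → ℝ)

theorem incrSq_add_le (a b x : G) :
    incrSq f (a + b) x ≤ 2 * incrSq f a (x + b) + 2 * incrSq f b x := by
  have hsq : (f (x + (a + b)) - f x) ^ 2
      ≤ 2 * (f (x + b + a) - f (x + b)) ^ 2 + 2 * (f (x + b) - f x) ^ 2 := by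
    rw [show x + (a + b) = x + b + a by abel]
    nlinarith [sq_nonneg (f (x + b + a) - 2 * f (x + b) + f x)]
  calc incrSq f (a + b) x
      ≤ ENNReal.ofReal (2 * (f (x + b + a) - f (x + b)) ^ 2 + 2 * (f (x + b) - f x) ^ 2) :=
        ENNReal.ofReal_le_ofReal hsq
    _ = 2 * incrSq f a (x + b) + 2 * incrSq f b x := by
        rw [ENNReal.ofReal_add (by positivity) (by positivity), ENNReal.ofReal_mul zero_le_two,
          ENNReal.ofReal_mul zero_le_two, ENNReal.ofReal_ofNat, incrSq, incrSq]

theorem incrSq_nsmul_le (N : ℕ) (e x : G) :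
    incrSq f (N • e) x ≤ N * ∑ k ∈ range N, incrSq f e (x + k • e) := by
  have htele : f (x + N • e) - f x = ∑ k ∈ range N, (f (x + k • e + e) - f (x + k • e)) := by
    simp only [add_assoc, ← succ_nsmul]
    rw [sum_range_sub (fun k => f (x + k • e)) N, zero_nsmul, add_zero]
  have hcs := sq_sum_le_card_mul_sum_sq (s := range N)
    (f := fun k => f (x + k • e + e) - f (x + k • e))
  rw [card_range, ← htele] at hcs
  calc incrSq f (N • e) x
      ≤ ENNReal.ofReal (N * ∑ k ∈ range N, (f (x + k • e + e) - f (x + k • e)) ^ 2) :=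
        ENNReal.ofReal_le_ofReal hcs
    _ = N * ∑ k ∈ range N, incrSq f e (x + k • e) := by
        rw [ENNReal.ofReal_mul N.cast_nonneg, ENNReal.ofReal_natCast,
          ENNReal.ofReal_sum_of_nonneg fun k _ => sq_nonneg _]
        rfl

variable [MeasurableSpace G]

theorem Measurable.incrSq_uncurry [MeasurableAdd₂ G] {f : G → ℝ} (hf : Measurable f) :
    Measurable (Function.uncurry (incrSq f)) :=
  ((hf.comp (measurable_snd.add measurable_fst)).sub (hf.comp measurable_snd)).pow_const 2
    |>.ennreal_ofReal

theorem Measurable.incrSq [MeasurableAdd G] {f : G → ℝ} (hf : Measurable f) (c : G) :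
    Measurable (incrSq f c) :=
  ((hf.comp (measurable_add_const c)).sub hf).pow_const 2 |>.ennreal_ofReal

theorem incrSq_ae_eq_of_ae_eq [MeasurableAdd G] {μ : Measure G} [μ.IsAddRightInvariant]
    {f f' : G → ℝ} (hff' : f =ᵐ[μ] f') (c : G) : incrSq f c =ᵐ[μ] incrSq f' c := by
  have hshift : (fun x => f (x + c)) =ᵐ[μ] fun x => f' (x + c) :=
    (measurePreserving_add_right μ c).quasiMeasurePreserving.ae_eq hff'
  filter_upwards [hshift, hff'] with x hx hx'
  simp only [incrSq, hx, hx']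

theorem setLIntegral_incrSq_le [MeasurableAdd G] (μ : Measure G) [μ.IsAddRightInvariant]
    {f : G → ℝ} (hf : Measurable f) {A T : Set G} {b e y : G}
    (hb : MapsTo (· + b) A T) (hby : MapsTo (· + (b + y)) A T) :
    ∫⁻ x in A, incrSq f e (x + b) ∂μ
      ≤ 2 * ∫⁻ x in T, incrSq f (e - y) x ∂μ + 2 * ∫⁻ x in T, incrSq f y x ∂μ := by
  have hsplit : ∀ x, incrSq f e (x + b)
      ≤ 2 * incrSq f (e - y) (x + (b + y)) + 2 * incrSq f y (x + b) := fun x => by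
    simpa only [sub_add_cancel, add_assoc] using incrSq_add_le f (e - y) y (x + b)
  have hmeas : Measurable fun x => 2 * incrSq f (e - y) (x + (b + y)) :=
    ((hf.incrSq _).comp (measurable_add_const _)).const_mul 2
  calc ∫⁻ x in A, incrSq f e (x + b) ∂μ
      ≤ ∫⁻ x in A, 2 * incrSq f (e - y) (x + (b + y)) + 2 * incrSq f y (x + b) ∂μ :=
        lintegral_mono hsplit
    _ = 2 * ∫⁻ x in A, incrSq f (e - y) (x + (b + y)) ∂μ
          + 2 * ∫⁻ x in A, incrSq f y (x + b) ∂μ := by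
        rw [lintegral_add_left hmeas, lintegral_const_mul' _ _ ofNat_ne_top,
          lintegral_const_mul' _ _ ofNat_ne_top]
    _ ≤ 2 * ∫⁻ x in T, incrSq f (e - y) x ∂μ + 2 * ∫⁻ x in T, incrSq f y x ∂μ := by
        gcongr 2 * ?_ + 2 * ?_
        · exact (measurePreserving_add_right μ _).setLIntegral_comp_le_of_mapsTo
            (measurableEmbedding_addRight _) hby _
        · exact (measurePreserving_add_right μ _).setLIntegral_comp_le_of_mapsTo
            (measurableEmbedding_addRight _) hb _

end AddCommGroup

theorem add_nsmul_add_mem_thickening {E : Type*} [SeminormedAddCommGroup E] {s : Set E}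
    {a e y : E} {k N : ℕ} (ha : a ∈ s) (hk : k < N) (hy : ‖y‖ < ‖e‖) :
    a + k • e + y ∈ thickening (N * ‖e‖) s := by
  refine mem_thickening_iff.2 ⟨a, ha, ?_⟩
  have hkN : (k + 1 : ℝ) ≤ N := by exact_mod_cast hk
  calc dist (a + k • e + y) a = ‖k • e + y‖ := by rw [dist_eq_norm, add_assoc, add_sub_cancel_left]
    _ ≤ k * ‖e‖ + ‖y‖ := (norm_add_le _ _).trans (by gcongr; exact norm_nsmul_le)
    _ < (k + 1) * ‖e‖ := by linarith
    _ ≤ N * ‖e‖ := by gcongr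

theorem exists_nsmul_eq_norm_mem_Icc {E : Type*} [NormedAddCommGroup E] [NormedSpace ℝ E]
    {h : E} {ρ : ℝ} (hρ : 0 < ρ) (hρh : ρ ≤ ‖h‖) :
    ∃ (N : ℕ) (e : E), N • e = h ∧ ρ / 3 ≤ ‖e‖ ∧ ‖e‖ ≤ ρ / 2 := by
  have hh : 0 < ‖h‖ := hρ.trans_le hρh
  set N := ⌈2 * ‖h‖ / ρ⌉₊
  have hNge : 2 * ‖h‖ ≤ N * ρ := (div_le_iff₀ hρ).1 (Nat.le_ceil _)
  have hNlt : (N : ℝ) * ρ < 2 * ‖h‖ + ρ :=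
    calc (N : ℝ) * ρ < (2 * ‖h‖ / ρ + 1) * ρ := by
          gcongr; exact Nat.ceil_lt_add_one (by positivity)
      _ = 2 * ‖h‖ + ρ := by field_simp
  have hNpos : (0 : ℝ) < N := by nlinarith
  refine ⟨N, (N : ℝ)⁻¹ • h, ?_, ?_, ?_⟩
  · rw [← Nat.cast_smul_eq_nsmul ℝ, smul_inv_smul₀ hNpos.ne']
  all_goals rw [norm_smul, norm_inv, Real.norm_natCast, inv_mul_eq_div]
  · rw [le_div_iff₀ hNpos]; nlinarith
  · rw [div_le_iff₀ hNpos]; nlinarith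

theorem four_mul_natCast_sq_le_of_mul_le {N : ℕ} {ρ H m : ℝ} (n : ℕ) (hρ : 0 < ρ) (hm : 0 < m)
    (hN : N * ρ ≤ 3 * H) :
    4 * (N : ℝ≥0∞) ^ 2
      ≤ ENNReal.ofReal (36 * 4 ^ n / m * H ^ 2 / ρ ^ (n + 2)) * ENNReal.ofReal ((ρ / 4) ^ n * m) := by
  have hreal : 36 * 4 ^ n / m * H ^ 2 / ρ ^ (n + 2) * ((ρ / 4) ^ n * m) = 36 * H ^ 2 / ρ ^ 2 := by
    rw [div_pow, pow_add]
    field_simp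
  have hlhs : 4 * (N : ℝ≥0∞) ^ 2 = ENNReal.ofReal (4 * N ^ 2) := by
    rw [ENNReal.ofReal_mul zero_le_four, ENNReal.ofReal_pow N.cast_nonneg,
      ENNReal.ofReal_natCast, ENNReal.ofReal_ofNat]
  rw [← ENNReal.ofReal_mul (by positivity), hreal, hlhs]
  refine ENNReal.ofReal_le_ofReal ((le_div_iff₀ (by positivity)).2 ?_)
  nlinarith [mul_nonneg N.cast_nonneg hρ.le]

section Averaging

variable {E : Type*} [SeminormedAddCommGroup E] [MeasurableSpace E] [MeasurableAdd₂ E]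
  [MeasurableNeg E] (μ : Measure E) [μ.IsAddLeftInvariant] [μ.IsNegInvariant]
  {f : E → ℝ}

theorem measure_ball_mul_setLIntegral_incrSq_le [SFinite μ] (hf : Measurable f)
    {A T : Set E} {b e : E} {r R : ℝ} (hR : ‖e‖ + r ≤ R)
    (hAT : ∀ a ∈ A, ∀ y, ‖y‖ < r → a + b + y ∈ T) :
    μ (ball 0 r) * ∫⁻ x in A, incrSq f e (x + b) ∂μ
      ≤ 4 * ∫⁻ y in ball 0 R, ∫⁻ x in T, incrSq f y x ∂μ ∂μ := by
  set K : E → ℝ≥0∞ := fun z => ∫⁻ x in T, incrSq f z x ∂μ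
  have hK : Measurable K := hf.incrSq_uncurry.lintegral_prod_right'
  have hKsub : Measurable fun y => K (e - y) := hK.comp (measurable_const.sub measurable_id)
  have hpointwise : ∀ y ∈ ball (0 : E) r,
      ∫⁻ x in A, incrSq f e (x + b) ∂μ ≤ 2 * K (e - y) + 2 * K y := by
    intro y hy
    rw [mem_ball_zero_iff] at hy
    refine setLIntegral_incrSq_le μ hf (fun a ha => ?_) (fun a ha => ?_)
    · simpa using hAT a ha 0 (by simpa using (norm_nonneg y).trans_lt hy)
    · simpa [add_assoc] using hAT a ha y hy
  have hsub : ∫⁻ y in ball 0 r, K (e - y) ∂μ ≤ ∫⁻ y in ball 0 R, K y ∂μ := by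
    refine (Measure.measurePreserving_sub_left μ e).setLIntegral_comp_le_of_mapsTo
      (MeasurableEquiv.subLeft e).measurableEmbedding (fun y hy => ?_) K
    rw [mem_ball_zero_iff] at hy ⊢
    linarith [norm_sub_le e y]
  have hball : ∫⁻ y in ball 0 r, K y ∂μ ≤ ∫⁻ y in ball 0 R, K y ∂μ :=
    lintegral_mono_set (ball_subset_ball (by linarith [norm_nonneg e]))
  calc μ (ball 0 r) * ∫⁻ x in A, incrSq f e (x + b) ∂μ
      = ∫⁻ _ in ball 0 r, ∫⁻ x in A, incrSq f e (x + b) ∂μ ∂μ := by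
        rw [setLIntegral_const, mul_comm]
    _ ≤ ∫⁻ y in ball 0 r, 2 * K (e - y) + 2 * K y ∂μ :=
        setLIntegral_mono ((hKsub.const_mul 2).add (hK.const_mul 2)) hpointwise
    _ = 2 * ∫⁻ y in ball 0 r, K (e - y) ∂μ + 2 * ∫⁻ y in ball 0 r, K y ∂μ := by
        rw [lintegral_add_left (hKsub.const_mul 2), lintegral_const_mul 2 hKsub,
          lintegral_const_mul 2 hK]
    _ ≤ 2 * ∫⁻ y in ball 0 R, K y ∂μ + 2 * ∫⁻ y in ball 0 R, K y ∂μ := by gcongr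
    _ = 4 * ∫⁻ y in ball 0 R, K y ∂μ := by ring

theorem measure_ball_mul_setLIntegral_incrSq_nsmul_le [SFinite μ] (hf : Measurable f)
    {Ω T : Set E} {N : ℕ} {e : E} {r R : ℝ} (hR : ‖e‖ + r ≤ R)
    (hT : ∀ k < N, ∀ a ∈ Ω, ∀ y, ‖y‖ < r → a + k • e + y ∈ T) :
    μ (ball 0 r) * ∫⁻ x in Ω, incrSq f (N • e) x ∂μ
      ≤ 4 * N ^ 2 * ∫⁻ y in ball 0 R, ∫⁻ x in T, incrSq f y x ∂μ ∂μ := by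
  have hmeas : ∀ k ∈ range N, Measurable fun x => incrSq f e (x + k • e) :=
    fun k _ => (hf.incrSq e).comp (measurable_add_const _)
  calc μ (ball 0 r) * ∫⁻ x in Ω, incrSq f (N • e) x ∂μ
      ≤ μ (ball 0 r) * ∫⁻ x in Ω, N * ∑ k ∈ range N, incrSq f e (x + k • e) ∂μ := by
        gcongr with x
        exact incrSq_nsmul_le f N e x
    _ = N * ∑ k ∈ range N, μ (ball 0 r) * ∫⁻ x in Ω, incrSq f e (x + k • e) ∂μ := by
        rw [lintegral_const_mul _ (Finset.measurable_sum _ hmeas), lintegral_finsetSum _ hmeas,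
          mul_sum, mul_sum, mul_sum]
        ring_nf
    _ ≤ N * ∑ _k ∈ range N, 4 * ∫⁻ y in ball 0 R, ∫⁻ x in T, incrSq f y x ∂μ ∂μ := by
        gcongr _ * ∑ _ ∈ _, ?_ with k hk
        exact measure_ball_mul_setLIntegral_incrSq_le μ hf hR (hT k (mem_range.1 hk))
    _ = 4 * N ^ 2 * ∫⁻ y in ball 0 R, ∫⁻ x in T, incrSq f y x ∂μ ∂μ := by
        rw [sum_const, card_range, nsmul_eq_mul]
        ring

end Averaging

section Haar

variable {E : Type*} [NormedAddCommGroup E] [NormedSpace ℝ E] [MeasurableSpace E] [BorelSpace E]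
  [FiniteDimensional ℝ E] (μ : Measure E) [μ.IsAddHaarMeasure]

theorem setLIntegral_incrSq_le_of_le_norm {f : E → ℝ} (hf : AEMeasurable f μ) (Ω : Set E)
    {h : E} {ρ : ℝ} (hρ : 0 < ρ) (hρh : ρ ≤ ‖h‖) :
    ∫⁻ x in Ω, incrSq f h x ∂μ
      ≤ ENNReal.ofReal (36 * 4 ^ finrank ℝ E / (μ (ball 0 1)).toReal * ‖h‖ ^ 2
          / ρ ^ (finrank ℝ E + 2))
        * ∫⁻ y in ball 0 ρ, ∫⁻ x in thickening ‖h‖ Ω, incrSq f y x ∂μ ∂μ := by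
  obtain ⟨f', hf', hff'⟩ := hf
  have hcongr : ∀ c s, ∫⁻ x in s, incrSq f c x ∂μ = ∫⁻ x in s, incrSq f' c x ∂μ :=
    fun c s => lintegral_congr_ae (ae_restrict_of_ae (incrSq_ae_eq_of_ae_eq hff' c))
  simp only [hcongr]
  obtain ⟨N, e, rfl, he3, he2⟩ := exists_nsmul_eq_norm_mem_Icc hρ hρh
  have hNe : ‖N • e‖ = N * ‖e‖ := by simpa using RCLike.norm_nsmul ℝ N e
  have hT : ∀ k < N, ∀ a ∈ Ω, ∀ y : E, ‖y‖ < ρ / 4 → a + k • e + y ∈ thickening ‖N • e‖ Ω :=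
    fun k hk a ha y hy => hNe ▸ add_nsmul_add_mem_thickening ha hk (by linarith)
  have hkey := measure_ball_mul_setLIntegral_incrSq_nsmul_le μ hf' (R := ρ) (by linarith) hT
  set n := finrank ℝ E
  set m := (μ (ball (0 : E) 1)).toReal
  have hm : 0 < m := ENNReal.toReal_pos (measure_ball_pos μ _ one_pos).ne' measure_ball_lt_top.ne
  have hball : μ (ball 0 (ρ / 4)) = ENNReal.ofReal ((ρ / 4) ^ n * m) := by
    rw [Measure.addHaar_ball_of_pos μ _ (by positivity), ENNReal.ofReal_mul (by positivity),
      ENNReal.ofReal_toReal measure_ball_lt_top.ne]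
  have hNρ : N * ρ ≤ 3 * ‖N • e‖ := by rw [hNe]; nlinarith [N.cast_nonneg (α := ℝ)]
  have hconst : 4 * (N : ℝ≥0∞) ^ 2
      ≤ ENNReal.ofReal (36 * 4 ^ n / m * ‖N • e‖ ^ 2 / ρ ^ (n + 2)) * μ (ball 0 (ρ / 4)) := by
    rw [hball]
    exact four_mul_natCast_sq_le_of_mul_le n hρ hm hNρ
  rw [← ENNReal.mul_le_mul_iff_right (measure_ball_pos μ 0 (by positivity : 0 < ρ / 4)).ne'
    measure_ball_lt_top.ne]
  calc μ (ball 0 (ρ / 4)) * ∫⁻ x in Ω, incrSq f' (N • e) x ∂μ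
      ≤ 4 * N ^ 2 * ∫⁻ y in ball 0 ρ, ∫⁻ x in thickening ‖N • e‖ Ω, incrSq f' y x ∂μ ∂μ := hkey
    _ ≤ _ := by grw [hconst, mul_comm _ (μ _), mul_assoc]

end Haar

theorem stmt13_general (d : ℕ) :
    ∃ C : ℝ, 0 < C ∧
      ∀ (v : EuclideanSpace ℝ (Fin d) → ℝ), MemLp v 2 volume →
      ∀ (h : EuclideanSpace ℝ (Fin d)) (Ω' : Set (EuclideanSpace ℝ (Fin d))),
        IsOpen Ω' → Bornology.IsBounded Ω' →
      ∀ ρ : ℝ, 0 < ρ → ρ ≤ ‖h‖ →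
        (∫⁻ x in Ω', ENNReal.ofReal ((v (x + h) - v x) ^ 2))
          ≤ ENNReal.ofReal (C * ‖h‖ ^ 2 / ρ ^ ((d : ℝ) + 2)) *
            ∫⁻ y in Metric.ball (0 : EuclideanSpace ℝ (Fin d)) ρ,
              ∫⁻ x in Metric.thickening ‖h‖ Ω', ENNReal.ofReal ((v (x + y) - v x) ^ 2) := by
  have hball : 0 < (volume (ball (0 : EuclideanSpace ℝ (Fin d)) 1)).toReal :=
    ENNReal.toReal_pos (measure_ball_pos _ _ one_pos).ne' measure_ball_lt_top.ne
  refine ⟨36 * 4 ^ d / (volume (ball (0 : EuclideanSpace ℝ (Fin d)) 1)).toReal, by positivity, ?_⟩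
  intro v hv h Ω' _ _ ρ hρ hρh
  have hpow : ρ ^ ((d : ℝ) + 2) = ρ ^ (d + 2) := by exact_mod_cast Real.rpow_natCast ρ (d + 2)
  have := setLIntegral_incrSq_le_of_le_norm volume hv.aestronglyMeasurable.aemeasurable Ω' hρ hρh
  rwa [finrank_euclideanSpace_fin, ← hpow] at this

/-- estimate of the `L²` distance of a function from its shift. -/
theorem stmt13 (d : ℕ) (hd : 1 ≤ d) :
    ∃ C : ℝ, 0 < C ∧
      ∀ (v : EuclideanSpace ℝ (Fin d) → ℝ), MemLp v 2 volume →
      ∀ (h : EuclideanSpace ℝ (Fin d)) (Ω' : Set (EuclideanSpace ℝ (Fin d))),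
        IsOpen Ω' → Bornology.IsBounded Ω' →
      ∀ ρ : ℝ, 0 < ρ → ρ ≤ ‖h‖ →
        (∫⁻ x in Ω', ENNReal.ofReal ((v (x + h) - v x) ^ 2))
          ≤ ENNReal.ofReal (C * ‖h‖ ^ 2 / ρ ^ ((d : ℝ) + 2)) *
            ∫⁻ y in Metric.ball (0 : EuclideanSpace ℝ (Fin d)) ρ,
              ∫⁻ x in Metric.thickening ‖h‖ Ω', ENNReal.ofReal ((v (x + y) - v x) ^ 2) :=
  stmt13_general d
end
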